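/- arXiv:1210.5111 — 4 statements merged into one kernel-verified Lean document; each statement's English description precedes it below -/
import Mathlib

section
/- Let T̃ > 0 and C > 0 be real numbers. For each natural number n ≥ 1 define g_n(x) = x·T̃ − ln x − (n−1)·ln(1+x) for x > 0, x*_n = (√((T̃−n)² + 4T̃) + n − T̃)/(2T̃), and U*_n = C·exp(g_n(x*_n)). Then for every δ with 0 < δ < 1, the sequence U*_n · n^(δ·n) tends to 0 as n → ∞; in particular U*_n = O(n^(−δ·n)), i.e. the convergence rate of U*_n to zero is super-geometric. -/
/-! For `n ≥ 2T` the optimizer satisfies `n / (2T) ≤ x*_n` and `x*_n T ≤ n + √T`, while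
`(n - 1) log (1 + x) ≥ (n - 1) log x`. Hence
`g_n(x*_n) ≤ n (1 + log (2T)) + √T - n log n`, and multiplying `exp (g_n(x*_n))` by
`n ^ (δ n) = exp (δ n log n)` leaves an exponent `n (1 + log (2T)) + √T - (1 - δ) n log n`,
which tends to `-∞` because `n log n` beats any multiple of `n`. -/

open Real Filter

lemma tendsto_add_mul_sub_mul_log_atBot (K c : ℝ) {ε : ℝ} (hε : 0 < ε) :
    Tendsto (fun x : ℝ => x * K + c - ε * x * log x) atTop atBot := by
  have hK : Tendsto (fun x : ℝ => K - ε * log x) atTop atBot :=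
    tendsto_atBot_add_const_left _ K <|
      tendsto_neg_atTop_atBot.comp (tendsto_log_atTop.const_mul_atTop hε)
  refine (tendsto_atBot_add_const_right _ c (tendsto_id.atTop_mul_atBot₀ hK)).congr fun x => ?_
  simp only [id]
  ring

lemma div_le_sqrt_add_sub_div {T n : ℝ} (hT : 0 < T) (hn : 2 * T ≤ n) :
    n / (2 * T) ≤ (√((T - n) ^ 2 + 4 * T) + n - T) / (2 * T) := by
  have h : n - T ≤ √((T - n) ^ 2 + 4 * T) :=
    calc n - T ≤ |T - n| := by rw [abs_sub_comm]; exact le_abs_self _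
      _ = √((T - n) ^ 2) := (sqrt_sq_eq_abs _).symm
      _ ≤ √((T - n) ^ 2 + 4 * T) := sqrt_le_sqrt (by linarith)
  gcongr
  linarith

lemma sqrt_add_sub_div_mul_le {T n : ℝ} (hT : 0 < T) (hn : T ≤ n) :
    (√((T - n) ^ 2 + 4 * T) + n - T) / (2 * T) * T ≤ n + √T := by
  have hsqrtT := sq_sqrt hT.le
  have h : √((T - n) ^ 2 + 4 * T) ≤ n - T + 2 * √T :=
    sqrt_le_iff.mpr ⟨by positivity, by nlinarith [sqrt_nonneg T]⟩
  rw [div_mul_eq_mul_div, div_le_iff₀ (by positivity)]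
  nlinarith [sqrt_nonneg T]

lemma sub_log_sub_mul_log_one_add_le {x : ℝ} (hx : 0 < x) {n : ℝ} (hn : 1 ≤ n) (y : ℝ) :
    y - log x - (n - 1) * log (1 + x) ≤ y - n * log x := by
  have : (n - 1) * log x ≤ (n - 1) * log (1 + x) :=
    mul_le_mul_of_nonneg_left (log_le_log hx (by linarith)) (by linarith)
  linarith

lemma g_optimizer_le {T n : ℝ} (hT : 0 < T) (hn1 : 1 ≤ n) (hnT : 2 * T ≤ n) :
    let x := (√((T - n) ^ 2 + 4 * T) + n - T) / (2 * T)
    x * T - log x - (n - 1) * log (1 + x) ≤ n * (1 + log (2 * T)) + √T - n * log n := by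
  intro x
  have hx : n / (2 * T) ≤ x := div_le_sqrt_add_sub_div hT hnT
  have hlog : log n - log (2 * T) ≤ log x := by
    rw [← log_div (by positivity) (by positivity)]
    exact log_le_log (by positivity) hx
  have := mul_le_mul_of_nonneg_left hlog (by linarith : 0 ≤ n)
  calc x * T - log x - (n - 1) * log (1 + x)
      ≤ x * T - n * log x := sub_log_sub_mul_log_one_add_le ((by positivity : 0 < n / (2 * T)).trans_le hx) hn1 _
    _ ≤ n + √T - n * log x := by linarith [sqrt_add_sub_div_mul_le hT (by linarith : T ≤ n)]
    _ ≤ n * (1 + log (2 * T)) + √T - n * log n := by linarith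

theorem stmt_1_general (T C : ℝ) (hT : 0 < T)
    (g : ℕ → ℝ → ℝ)
    (hg : ∀ n : ℕ, ∀ x : ℝ, g n x = x * T - Real.log x - (n - 1 : ℝ) * Real.log (1 + x))
    (xs : ℕ → ℝ)
    (hxs : ∀ n : ℕ, xs n = (Real.sqrt ((T - n) ^ 2 + 4 * T) + n - T) / (2 * T))
    (U : ℕ → ℝ) (hU : ∀ n : ℕ, U n = C * Real.exp (g n (xs n)))
    (δ : ℝ) (hδ1 : δ < 1) :
    Filter.Tendsto (fun n : ℕ => U n * (n : ℝ) ^ (δ * n)) Filter.atTop (nhds 0) := by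
  have hbound : Tendsto (fun n : ℕ => exp ((n : ℝ) * (1 + log (2 * T)) + √T
      - (1 - δ) * n * log n)) atTop (nhds 0) :=
    tendsto_exp_atBot.comp <| (tendsto_add_mul_sub_mul_log_atBot _ _ (by linarith)).comp
      tendsto_natCast_atTop_atTop
  have hexp : Tendsto (fun n : ℕ => exp (g n (xs n)) * (n : ℝ) ^ (δ * n)) atTop (nhds 0) := by
    refine squeeze_zero' (Eventually.of_forall fun n => by positivity) ?_ hbound
    filter_upwards [eventually_ge_atTop 1,
      tendsto_natCast_atTop_atTop.eventually_ge_atTop (2 * T)] with n hn1 hnT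
    have hn1 : (1 : ℝ) ≤ n := by exact_mod_cast hn1
    rw [rpow_def_of_pos (by positivity), ← exp_add, exp_le_exp, hg, hxs]
    linarith [g_optimizer_le hT hn1 hnT]
  simpa [hU, mul_assoc] using hexp.const_mul C

theorem stmt_1 (T C : ℝ) (hT : 0 < T) (hC : 0 < C)
    (g : ℕ → ℝ → ℝ)
    (hg : ∀ n : ℕ, ∀ x : ℝ, g n x = x * T - Real.log x - (n - 1 : ℝ) * Real.log (1 + x))
    (xs : ℕ → ℝ)
    (hxs : ∀ n : ℕ, xs n = (Real.sqrt ((T - n) ^ 2 + 4 * T) + n - T) / (2 * T))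
    (U : ℕ → ℝ) (hU : ∀ n : ℕ, U n = C * Real.exp (g n (xs n)))
    (δ : ℝ) (hδ0 : 0 < δ) (hδ1 : δ < 1) :
    Filter.Tendsto (fun n : ℕ => U n * (n : ℝ) ^ (δ * n)) Filter.atTop (nhds 0) :=
  stmt_1_general T C hT g hg xs hxs U hU δ hδ1
end

section
/- Let α < 0, β > 0 and t, T be real numbers with t + 1 ≤ T. For s ∈ (t, T] set ν_s = √(β²·(1 − e^{2α(s−t)})/(2|α|)). Then ∫_t^T (1/ν_s) ds ≤ 3·√(2|α|/(β²·(1 − e^{2α})))·(T − t). -/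
/-! Factor the constant `2|α|/β²` out of `1/ν_s`; what remains is `(1 - e^{2αu})^{-1/2}` with
`u = s - t`. Since `1 - e^{au} ≥ min u 1 · (1 - e^a)` for `a < 0` (convexity of `exp` on `[0, 1]`,
monotonicity beyond), this is at most `(1 - e^a)^{-1/2} (u^{-1/2} + 1)`, whose integral over
`[0, L]` is `(1 - e^a)^{-1/2} (2√L + L) ≤ 3 (1 - e^a)^{-1/2} L` once `L ≥ 1`. -/

open Real Set MeasureTheory intervalIntegral

lemma min_one_mul_one_sub_exp_le {a u : ℝ} (ha : a ≤ 0) (hu : 0 ≤ u) :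
    min u 1 * (1 - exp a) ≤ 1 - exp (a * u) := by
  rcases le_total u 1 with hu1 | hu1
  · have hconv : exp (a * u) ≤ (1 - u) + u * exp a := by
      simpa [smul_eq_mul, mul_comm] using
        convexOn_exp.2 (mem_univ 0) (mem_univ a) (sub_nonneg.2 hu1) hu (by ring)
    rw [min_eq_left hu1]
    linarith
  · have : exp (a * u) ≤ exp a := exp_le_exp.2 (by nlinarith)
    rw [min_eq_right hu1]
    linarith

lemma sqrt_inv_min_one_le {u : ℝ} (hu : 0 < u) :
    √(min u 1)⁻¹ ≤ u ^ (-(1 / 2) : ℝ) + 1 := by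
  have hpow : 0 ≤ u ^ (-(1 / 2) : ℝ) := rpow_nonneg hu.le _
  rcases le_total u 1 with hu1 | hu1
  · rw [min_eq_left hu1, sqrt_inv, sqrt_eq_rpow, ← rpow_neg hu.le]
    linarith
  · rw [min_eq_right hu1, inv_one, sqrt_one]
    linarith

lemma sqrt_inv_one_sub_exp_mul_le {a u : ℝ} (ha : a < 0) (hu : 0 < u) :
    √(1 - exp (a * u))⁻¹ ≤ √(1 - exp a)⁻¹ * (u ^ (-(1 / 2) : ℝ) + 1) := by
  have hA : 0 < 1 - exp a := sub_pos.2 (exp_lt_one_iff.2 ha)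
  have hmin : 0 < min u 1 * (1 - exp a) := mul_pos (lt_min hu one_pos) hA
  calc √(1 - exp (a * u))⁻¹
      ≤ √(min u 1 * (1 - exp a))⁻¹ :=
        sqrt_le_sqrt (inv_anti₀ hmin (min_one_mul_one_sub_exp_le ha.le hu.le))
    _ = √(1 - exp a)⁻¹ * √(min u 1)⁻¹ := by
        rw [mul_inv, sqrt_mul (inv_nonneg.2 (lt_min hu one_pos).le), mul_comm]
    _ ≤ √(1 - exp a)⁻¹ * (u ^ (-(1 / 2) : ℝ) + 1) :=
        mul_le_mul_of_nonneg_left (sqrt_inv_min_one_le hu) (sqrt_nonneg _)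

lemma integral_rpow_neg_half_add_one (L : ℝ) :
    ∫ u in (0 : ℝ)..L, (u ^ (-(1 / 2) : ℝ) + 1) = 2 * √L + L := by
  rw [integral_add (intervalIntegral.intervalIntegrable_rpow' (by norm_num))
    intervalIntegrable_const, integral_rpow (Or.inl (by norm_num)), sqrt_eq_rpow]
  norm_num
  ring

lemma integral_sqrt_inv_one_sub_exp_mul_le {a L : ℝ} (ha : a < 0) (hL : 1 ≤ L) :
    ∫ u in (0 : ℝ)..L, √(1 - exp (a * u))⁻¹ ≤ 3 * √(1 - exp a)⁻¹ * L := by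
  have hL0 : (0 : ℝ) ≤ L := zero_le_one.trans hL
  have hmajorant : IntervalIntegrable (fun u : ℝ ↦ √(1 - exp a)⁻¹ * (u ^ (-(1 / 2) : ℝ) + 1))
      volume 0 L :=
    ((intervalIntegral.intervalIntegrable_rpow' (by norm_num)).add
      intervalIntegrable_const).const_mul _
  calc ∫ u in (0 : ℝ)..L, √(1 - exp (a * u))⁻¹
      ≤ ∫ u in (0 : ℝ)..L, √(1 - exp a)⁻¹ * (u ^ (-(1 / 2) : ℝ) + 1) := by
        rw [integral_of_le hL0, integral_of_le hL0]
        exact setIntegral_mono_of_nonneg (fun _ _ ↦ sqrt_nonneg _)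
          (fun u hu ↦ sqrt_inv_one_sub_exp_mul_le ha hu.1)
          ((intervalIntegrable_iff_integrableOn_Ioc_of_le hL0).1 hmajorant)
    _ = √(1 - exp a)⁻¹ * (2 * √L + L) := by
        rw [intervalIntegral.integral_const_mul, integral_rpow_neg_half_add_one L]
    _ ≤ 3 * √(1 - exp a)⁻¹ * L := by
        have : √L ≤ L := sqrt_le_self_iff.2 (Or.inr hL)
        nlinarith [sqrt_nonneg (1 - exp a)⁻¹]

theorem stmt_8_general (α β t T : ℝ) (hα : α < 0) (htT : t + 1 ≤ T)
    (ν : ℝ → ℝ)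
    (hν : ∀ s : ℝ, ν s = Real.sqrt (β ^ 2 * (1 - Real.exp (2 * α * (s - t))) / (2 * |α|))) :
    (∫ s in t..T, 1 / ν s) ≤
      3 * Real.sqrt (2 * |α| / (β ^ 2 * (1 - Real.exp (2 * α)))) * (T - t) := by
  have hK : 0 ≤ 2 * |α| / β ^ 2 := by positivity
  have hν_inv : ∀ s, 1 / ν s = √(2 * |α| / β ^ 2) * √(1 - exp (2 * α * (s - t)))⁻¹ := by
    intro s
    rw [hν, one_div, ← sqrt_inv, inv_div, ← div_div, div_eq_mul_inv, sqrt_mul hK]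
  calc (∫ s in t..T, 1 / ν s)
      = √(2 * |α| / β ^ 2) * ∫ u in (0 : ℝ)..T - t, √(1 - exp (2 * α * u))⁻¹ := by
        simp_rw [hν_inv, intervalIntegral.integral_const_mul, integral_comp_sub_right
          (fun u ↦ √(1 - exp (2 * α * u))⁻¹) t, sub_self]
    _ ≤ √(2 * |α| / β ^ 2) * (3 * √(1 - exp (2 * α))⁻¹ * (T - t)) :=
        mul_le_mul_of_nonneg_left
          (integral_sqrt_inv_one_sub_exp_mul_le (by linarith) (by linarith)) (sqrt_nonneg _)
    _ = 3 * √(2 * |α| / (β ^ 2 * (1 - exp (2 * α)))) * (T - t) := by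
        rw [← div_div, div_eq_mul_inv _ (1 - exp (2 * α)), sqrt_mul hK]
        ring

theorem stmt_8 (α β t T : ℝ) (hα : α < 0) (hβ : 0 < β) (htT : t + 1 ≤ T)
    (ν : ℝ → ℝ)
    (hν : ∀ s : ℝ, ν s = Real.sqrt (β ^ 2 * (1 - Real.exp (2 * α * (s - t))) / (2 * |α|))) :
    (∫ s in t..T, 1 / ν s) ≤
      3 * Real.sqrt (2 * |α| / (β ^ 2 * (1 - Real.exp (2 * α)))) * (T - t) :=
  stmt_8_general α β t T hα htT ν hν
end

section
/- Let Q : ℝ → ℝ be differentiable with Q(x) ≤ Q* and |Q′(x)| ≤ Q₁* for all x ∈ ℝ, let α ≤ 0, let t ≤ s be real numbers, and let w : ℝ → ℝ be continuous. Define F : ℝ → ℝ by F(y) = exp( ∫_t^s Q( y·e^{α(u−t)} + w(u) ) du ). Then F is differentiable on ℝ and |F′(y)| ≤ (s−t)·Q₁*·e^{Q*(s−t)} for every y ∈ ℝ. -/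
/-! Differentiating under the integral sign (the `y`-derivative of the integrand is bounded by
`Q₁* e^{α(u-t)}`) and applying the chain rule to `exp` gives
`F' y = F y * ∫ Q'(η_u) e^{α(u-t)} du`. Since `Q ≤ Q*`, `F y ≤ e^{Q*(s-t)}`; since `α ≤ 0` the
flow is contracting, `e^{α(u-t)} ≤ 1` on `[t, s]`, so the integral is at most `Q₁*(s-t)`. -/

open Real MeasureTheory intervalIntegral

theorem hasDerivAt_intervalIntegral_comp_mul_add {Q : ℝ → ℝ} {Q₁ : ℝ} (hQ : Differentiable ℝ Q)
    (hQ' : ∀ x, |deriv Q x| ≤ Q₁) {c w : ℝ → ℝ} (hc : Continuous c) (hw : Continuous w)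
    (a b y₀ : ℝ) :
    HasDerivAt (fun y => ∫ u in a..b, Q (y * c u + w u))
      (∫ u in a..b, deriv Q (y₀ * c u + w u) * c u) y₀ := by
  have hcont : ∀ y, Continuous fun u => Q (y * c u + w u) := fun y =>
    hQ.continuous.comp ((continuous_const.mul hc).add hw)
  refine (hasDerivAt_integral_of_dominated_loc_of_deriv_le (bound := fun u => Q₁ * |c u|)
    (F' := fun y u => deriv Q (y * c u + w u) * c u)
    (Metric.ball_mem_nhds y₀ one_pos) (.of_forall fun y => (hcont y).aestronglyMeasurable)
    ((hcont y₀).intervalIntegrable a b) ?_ ?_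
    ((continuous_const.mul hc.abs).intervalIntegrable (μ := volume) a b) ?_).2
  · exact (((measurable_deriv Q).comp ((measurable_const.mul hc.measurable).add hw.measurable)).mul
      hc.measurable).aestronglyMeasurable
  · refine .of_forall fun u _ y _ => ?_
    rw [norm_mul, Real.norm_eq_abs, Real.norm_eq_abs]
    exact mul_le_mul_of_nonneg_right (hQ' _) (abs_nonneg _)
  · exact .of_forall fun u _ y _ =>
      (hQ _).hasDerivAt.comp y ((hasDerivAt_mul_const (c u)).add_const (w u))

theorem abs_intervalIntegral_mul_exp_le {g : ℝ → ℝ} {C α t s : ℝ} (hα : α ≤ 0) (hts : t ≤ s)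
    (hg : ∀ u, |g u| ≤ C) :
    |∫ u in t..s, g u * exp (α * (u - t))| ≤ C * (s - t) := by
  rw [← abs_of_nonneg (sub_nonneg.2 hts), ← Real.norm_eq_abs]
  refine intervalIntegral.norm_integral_le_of_norm_le_const fun u hu => ?_
  have hexp : exp (α * (u - t)) ≤ 1 := exp_le_one_iff.2 <|
    mul_nonpos_of_nonpos_of_nonneg hα (by linarith [(Set.uIoc_of_le hts ▸ hu).1])
  rw [norm_mul, Real.norm_eq_abs, Real.norm_of_nonneg (exp_pos _).le]
  exact (mul_le_of_le_one_right (abs_nonneg _) hexp).trans (hg u)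

theorem stmt_13 (Q : ℝ → ℝ) (Qs Q₁ : ℝ) (hQdiff : Differentiable ℝ Q)
    (hQbound : ∀ x : ℝ, Q x ≤ Qs) (hQ'bound : ∀ x : ℝ, |deriv Q x| ≤ Q₁)
    (α t s : ℝ) (hα : α ≤ 0) (hts : t ≤ s)
    (w : ℝ → ℝ) (hw : Continuous w)
    (F : ℝ → ℝ)
    (hF : ∀ y : ℝ, F y = Real.exp (∫ u in t..s, Q (y * Real.exp (α * (u - t)) + w u))) :
    Differentiable ℝ F ∧ ∀ y : ℝ, |deriv F y| ≤ (s - t) * Q₁ * Real.exp (Qs * (s - t)) := by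
  have hc : Continuous fun u => exp (α * (u - t)) := by fun_prop
  have hF' : ∀ y, HasDerivAt F (exp (∫ u in t..s, Q (y * exp (α * (u - t)) + w u)) *
      ∫ u in t..s, deriv Q (y * exp (α * (u - t)) + w u) * exp (α * (u - t))) y := fun y => by
    rw [funext hF]
    exact (hasDerivAt_intervalIntegral_comp_mul_add hQdiff hQ'bound hc hw t s y).exp
  refine ⟨fun y => (hF' y).differentiableAt, fun y => ?_⟩
  have hexp : ∫ u in t..s, Q (y * exp (α * (u - t)) + w u) ≤ Qs * (s - t) := by
    simpa [mul_comm] using integral_mono_on hts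
      ((hQdiff.continuous.comp ((continuous_const.mul hc).add hw)).intervalIntegrable t s)
      (intervalIntegrable_const (μ := volume)) fun u _ => hQbound _
  have hderiv := abs_intervalIntegral_mul_exp_le hα hts fun u =>
    hQ'bound (y * exp (α * (u - t)) + w u)
  rw [(hF' y).deriv, abs_mul, abs_exp]
  calc _ ≤ exp (Qs * (s - t)) * (Q₁ * (s - t)) :=
        mul_le_mul (exp_le_exp.2 hexp) hderiv (abs_nonneg _) (exp_pos _).le
    _ = (s - t) * Q₁ * exp (Qs * (s - t)) := by ring
end

section
/- Let f : ℝ → ℝ be a bounded measurable function and let v > 0. Then the map m ↦ ∫ f(z) d(gaussianReal m v)(z) is differentiable on ℝ, and its derivative at any m₀ ∈ ℝ equals ∫ f(z)·(z − m₀)/v d(gaussianReal m₀ v)(z), where gaussianReal m v denotes the Gaussian measure on ℝ with mean m and variance v. -/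
/-! Write the Gaussian integral against the density `gaussianPDFReal m v` and differentiate under
the integral sign in the mean. The derivative of the density in `m` is the density times
`(z - m) / v`. For `|m - m₀| ≤ 1` it is dominated, uniformly in `m`, by a multiple of
`(|z - m₀| + 1) * exp (-(z - m₀) ^ 2 / (4 v))`, which is integrable, and `f` is bounded. -/

open ProbabilityTheory MeasureTheory Real

lemma hasDerivAt_gaussianPDFReal_mean (v : NNReal) (z m : ℝ) :
    HasDerivAt (fun m => gaussianPDFReal m v z) (gaussianPDFReal m v z * ((z - m) / v)) m := by
  have hexponent : HasDerivAt (fun m : ℝ => -(z - m) ^ 2 / (2 * v)) ((z - m) / v) m := by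
    refine HasDerivAt.congr_deriv (f := fun m : ℝ => -(z - m) ^ 2 / (2 * v))
      ((((hasDerivAt_id m).const_sub z).pow 2).neg.div_const _) ?_
    simp only [id]
    ring
  simpa only [gaussianPDFReal, mul_assoc] using hexponent.exp.const_mul (√(2 * π * v))⁻¹

/-- Completing the square: `(x - y) ^ 2 - x ^ 2 / 2 + y ^ 2 = (x - 2 y) ^ 2 / 2 ≥ 0`. -/
lemma exp_neg_sub_sq_div_le {c : ℝ} (hc : 0 < c) {y : ℝ} (hy : |y| ≤ 1) (x : ℝ) :
    exp (-(x - y) ^ 2 / c) ≤ exp (1 / c) * exp (-x ^ 2 / (2 * c)) := by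
  rw [← exp_add, exp_le_exp]
  have hy2 : y ^ 2 ≤ 1 := by nlinarith [abs_nonneg y, sq_abs y]
  calc -(x - y) ^ 2 / c ≤ (1 - x ^ 2 / 2) / c := by gcongr; nlinarith [sq_nonneg (x - 2 * y)]
    _ = 1 / c + -x ^ 2 / (2 * c) := by field_simp; ring

lemma integrable_abs_add_one_mul_exp_neg_mul_sq {b : ℝ} (hb : 0 < b) :
    Integrable (fun x : ℝ => (|x| + 1) * exp (-b * x ^ 2)) := by
  have habs : Integrable (fun x : ℝ => |x| * exp (-b * x ^ 2)) := by
    simpa only [abs_mul, abs_exp] using (integrable_mul_exp_neg_mul_sq hb).abs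
  exact (habs.add (integrable_exp_neg_mul_sq hb)).congr
    (.of_forall fun x => by simp only [Pi.add_apply]; ring)

lemma gaussianPDFReal_le_of_abs_sub_le_one {v : NNReal} (hv : 0 < v) {m m₀ : ℝ}
    (hm : |m - m₀| ≤ 1) (z : ℝ) :
    gaussianPDFReal m v z ≤
      (√(2 * π * v))⁻¹ * exp (1 / (2 * v)) * exp (-(4 * (v : ℝ))⁻¹ * (z - m₀) ^ 2) := by
  have h := exp_neg_sub_sq_div_le (c := 2 * v) (by positivity) hm (z - m₀)
  rw [sub_sub_sub_cancel_right] at h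
  calc gaussianPDFReal m v z = (√(2 * π * v))⁻¹ * exp (-(z - m) ^ 2 / (2 * v)) := rfl
    _ ≤ (√(2 * π * v))⁻¹ * (exp (1 / (2 * v)) * exp (-(z - m₀) ^ 2 / (2 * (2 * v)))) := by gcongr
    _ = _ := by ring_nf

lemma abs_gaussianPDFReal_mul_div_mul_le {v : NNReal} (hv : 0 < v) {m m₀ : ℝ}
    (hm : |m - m₀| ≤ 1) (z : ℝ) {a C : ℝ} (ha : |a| ≤ C) :
    |gaussianPDFReal m v z * ((z - m) / v) * a| ≤
      C * ((√(2 * π * v))⁻¹ * exp (1 / (2 * v)) / v) *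
        ((|z - m₀| + 1) * exp (-(4 * (v : ℝ))⁻¹ * (z - m₀) ^ 2)) := by
  have hv' : (0 : ℝ) < v := hv
  have hdist : |z - m| ≤ |z - m₀| + 1 := by
    calc |z - m| ≤ |z - m₀| + |m₀ - m| := abs_sub_le z m₀ m
      _ ≤ |z - m₀| + 1 := by rw [abs_sub_comm m₀]; gcongr
  rw [abs_mul, abs_mul, abs_div, abs_of_nonneg (gaussianPDFReal_nonneg m v z), abs_of_pos hv']
  calc gaussianPDFReal m v z * (|z - m| / v) * |a|
      ≤ (√(2 * π * v))⁻¹ * exp (1 / (2 * v)) * exp (-(4 * (v : ℝ))⁻¹ * (z - m₀) ^ 2) *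
          ((|z - m₀| + 1) / v) * C := by
        have hC : 0 ≤ C := (abs_nonneg a).trans ha
        gcongr
        exact gaussianPDFReal_le_of_abs_sub_le_one hv hm z
    _ = _ := by ring

theorem stmt_17 (f : ℝ → ℝ) (hf : Measurable f) (C : ℝ) (hbound : ∀ x : ℝ, |f x| ≤ C)
    (v : NNReal) (hv : 0 < v) (m₀ : ℝ) :
    HasDerivAt (fun m : ℝ => ∫ z, f z ∂(gaussianReal m v))
      (∫ z, f z * (z - m₀) / (v : ℝ) ∂(gaussianReal m₀ v)) m₀ := by
  have hF_meas (m : ℝ) : Measurable fun z => gaussianPDFReal m v z * f z :=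
    (measurable_gaussianPDFReal m v).mul hf
  have hF_int : Integrable fun z => gaussianPDFReal m₀ v z * f z :=
    (integrable_gaussianPDFReal m₀ v).mul_bdd hf.aestronglyMeasurable (.of_forall hbound)
  have hF'_meas : Measurable fun z => gaussianPDFReal m₀ v z * ((z - m₀) / v) * f z := by
    fun_prop
  have hdom := (integrable_abs_add_one_mul_exp_neg_mul_sq
    (b := (4 * (v : ℝ))⁻¹) (by positivity)).comp_sub_right m₀
  have hderiv := hasDerivAt_integral_of_dominated_loc_of_deriv_le (Metric.ball_mem_nhds m₀ one_pos)
    (.of_forall fun m => (hF_meas m).aestronglyMeasurable) hF_int hF'_meas.aestronglyMeasurable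
    (.of_forall fun z m hm => abs_gaussianPDFReal_mul_div_mul_le hv
      (Metric.mem_ball.mp hm).le z (hbound z))
    (hdom.const_mul _)
    (.of_forall fun z m _ => (hasDerivAt_gaussianPDFReal_mean v z m).mul_const (f z))
  simp only [integral_gaussianReal_eq_integral_smul hv.ne', smul_eq_mul]
  exact hderiv.2.congr_deriv (integral_congr_ae (.of_forall fun z => by simp only; ring))
end
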